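/- Let D and D' be finite fields with |D| > |D'|, and let m, n, m', n' ≥ 2 be integers. Then every graph homomorphism φ : D^{m×n} → D'^{m'×n'} is a (vertex) colouring, i.e. its image φ(D^{m×n}) is an adjacent set. -/

import Mathlib

open Matrix Function

/-- The rank of a matrix over a division ring: the dimension of its left row space. -/
noncomputable def rk {D : Type*} [DivisionRing D] {m n : ℕ}
    (A : Matrix (Fin m) (Fin n) D) : ℕ :=
  Module.finrank D (Submodule.span D (Set.range fun i => A i))

/-- A nonempty set of matrices, any two distinct members of which are adjacent
(`rk (A - B) = 1`). -/
def IsAdjSet {D : Type*} [DivisionRing D] {m n : ℕ}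
    (S : Set (Matrix (Fin m) (Fin n) D)) : Prop :=
  S.Nonempty ∧ ∀ A ∈ S, ∀ B ∈ S, A ≠ B → rk (A - B) = 1

/-- A maximal set: an adjacent set which is maximal under inclusion. -/
def IsMaxSet {D : Type*} [DivisionRing D] {m n : ℕ}
    (S : Set (Matrix (Fin m) (Fin n) D)) : Prop :=
  IsAdjSet S ∧ ∀ T : Set (Matrix (Fin m) (Fin n) D), IsAdjSet T → S ⊆ T → T = S

/-- `M₁`: matrices whose rows other than the first are zero. -/
def M1set (D : Type*) [DivisionRing D] (m n : ℕ) : Set (Matrix (Fin m) (Fin n) D) :=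
  {X | ∀ (i : Fin m) (j : Fin n), (i : ℕ) ≠ 0 → X i j = 0}

/-- `N₁`: matrices whose columns other than the first are zero. -/
def N1set (D : Type*) [DivisionRing D] (m n : ℕ) : Set (Matrix (Fin m) (Fin n) D) :=
  {X | ∀ (i : Fin m) (j : Fin n), (j : ℕ) ≠ 0 → X i j = 0}

/-- A maximal set of type one: `P·M₁ + A` with `P` invertible. -/
def IsTypeOne {D : Type*} [DivisionRing D] {m n : ℕ}
    (S : Set (Matrix (Fin m) (Fin n) D)) : Prop :=
  ∃ (P : Matrix (Fin m) (Fin m) D) (A : Matrix (Fin m) (Fin n) D),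
    IsUnit P ∧ S = (fun X => P * X + A) '' M1set D m n

/-- A maximal set of type two: `N₁·Q + A` with `Q` invertible. -/
def IsTypeTwo {D : Type*} [DivisionRing D] {m n : ℕ}
    (S : Set (Matrix (Fin m) (Fin n) D)) : Prop :=
  ∃ (Q : Matrix (Fin n) (Fin n) D) (A : Matrix (Fin m) (Fin n) D),
    IsUnit Q ∧ S = (fun X => X * Q + A) '' N1set D m n

/-- Two maximal sets of different types. -/
def DiffTypes {D : Type*} [DivisionRing D] {m n : ℕ}
    (M N : Set (Matrix (Fin m) (Fin n) D)) : Prop :=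
  (IsTypeOne M ∧ IsTypeTwo N) ∨ (IsTypeTwo M ∧ IsTypeOne N)

/-- The unit ball `B_A = D^{m×n}_{≤1} + A`. -/
def uball {D : Type*} [DivisionRing D] {m n : ℕ}
    (A : Matrix (Fin m) (Fin n) D) : Set (Matrix (Fin m) (Fin n) D) :=
  {X | rk (X - A) ≤ 1}

/-- A graph homomorphism: adjacency-preserving map. -/
def IsGraphHom {D D' : Type*} [DivisionRing D] [DivisionRing D'] {m n m' n' : ℕ}
    (φ : Matrix (Fin m) (Fin n) D → Matrix (Fin m') (Fin n') D') : Prop :=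
  ∀ A B, rk (A - B) = 1 → rk (φ A - φ B) = 1

/-- A degenerate graph homomorphism. -/
def Degenerate {D D' : Type*} [DivisionRing D] [DivisionRing D'] {m n m' n' : ℕ}
    (φ : Matrix (Fin m) (Fin n) D → Matrix (Fin m') (Fin n') D') : Prop :=
  ∃ (A : Matrix (Fin m) (Fin n) D) (M N : Set (Matrix (Fin m') (Fin n') D')),
    rk A ≤ 1 ∧ DiffTypes M N ∧ φ '' uball A ⊆ M ∪ N ∧ φ A ∈ M ∩ N

/-- A (vertex) colouring: the image is an adjacent set. -/
def IsColouring {D D' : Type*} [DivisionRing D] [DivisionRing D'] {m n m' n' : ℕ}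
    (φ : Matrix (Fin m) (Fin n) D → Matrix (Fin m') (Fin n') D') : Prop :=
  IsAdjSet (Set.range φ)

/-- A nonzero ring homomorphism. -/
def IsRingHomNZ {D D' : Type*} [DivisionRing D] [DivisionRing D'] (τ : D → D') : Prop :=
  (∀ x y, τ (x + y) = τ x + τ y) ∧ (∀ x y, τ (x * y) = τ x * τ y) ∧ τ ≠ 0

/-- A nonzero ring anti-homomorphism. -/
def IsAntiRingHomNZ {D D' : Type*} [DivisionRing D] [DivisionRing D'] (σ : D → D') : Prop :=
  (∀ x y, σ (x + y) = σ x + σ y) ∧ (∀ x y, σ (x * y) = σ y * σ x) ∧ σ ≠ 0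

/-- The `m × n` matrix with the matrix `Y` in the upper-left corner and zeros elsewhere. -/
def corner {D : Type*} [Zero D] {k l m n : ℕ} (Y : Matrix (Fin k) (Fin l) D) :
    Matrix (Fin m) (Fin n) D :=
  Matrix.of fun i j =>
    if hi : (i : ℕ) < k then if hj : (j : ℕ) < l then Y ⟨i, hi⟩ ⟨j, hj⟩ else 0 else 0

/-- A line of the affine geometry `AG(M)` of a maximal set `M`: a nonempty intersection
`M ∩ N` with `N` a maximal set of the other type. -/
def IsLine {D : Type*} [DivisionRing D] {m n : ℕ}
    (M ℓ : Set (Matrix (Fin m) (Fin n) D)) : Prop :=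
  ∃ N : Set (Matrix (Fin m) (Fin n) D), DiffTypes M N ∧ (M ∩ N).Nonempty ∧ ℓ = M ∩ N

/-- Condition (I). -/
def CondI {D D' : Type*} [DivisionRing D] [DivisionRing D'] {m n m' n' : ℕ}
    (φ : Matrix (Fin m) (Fin n) D → Matrix (Fin m') (Fin n') D') : Prop :=
  ∀ M N : Set (Matrix (Fin m) (Fin n) D), DiffTypes M N → (0 : Matrix (Fin m) (Fin n) D) ∈ M ∩ N →
    ∃ M' N' : Set (Matrix (Fin m') (Fin n') D'),
      DiffTypes M' N' ∧ φ '' M ⊆ M' ∧ φ '' N ⊆ N'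

/-- Condition (i) of the additive homomorphism theorem: `φ(X) = P X^τ Q`. -/
def Cond1 {D D' : Type*} [DivisionRing D] [DivisionRing D'] {m n m' n' : ℕ}
    (φ : Matrix (Fin m) (Fin n) D → Matrix (Fin m') (Fin n') D') : Prop :=
  ∃ (P : Matrix (Fin m') (Fin m) D') (Q : Matrix (Fin n) (Fin n') D') (τ : D → D'),
    2 ≤ rk P ∧ 2 ≤ rk Q ∧ IsRingHomNZ τ ∧ ∀ X, φ X = P * X.map τ * Q

/-- Condition (ii) of the additive homomorphism theorem: `φ(X) = P (ᵗX^σ) Q`. -/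
def Cond2 {D D' : Type*} [DivisionRing D] [DivisionRing D'] {m n m' n' : ℕ}
    (φ : Matrix (Fin m) (Fin n) D → Matrix (Fin m') (Fin n') D') : Prop :=
  ∃ (P : Matrix (Fin m') (Fin n) D') (Q : Matrix (Fin m) (Fin n') D') (σ : D → D'),
    2 ≤ rk P ∧ 2 ≤ rk Q ∧ IsAntiRingHomNZ σ ∧ ∀ X, φ X = P * (X.map σ)ᵀ * Q


section Helpers

open Module Submodule

variable {K : Type*} [Field K] {m n : ℕ}

lemma rk_eq_rank (A : Matrix (Fin m) (Fin n) K) : rk A = A.rank :=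
  (Matrix.rank_eq_finrank_span_row A).symm

lemma rk_transpose (A : Matrix (Fin m) (Fin n) K) : rk Aᵀ = rk A := by
  rw [rk_eq_rank, rk_eq_rank, Matrix.rank_transpose]

lemma rk_eq_zero_iff (A : Matrix (Fin m) (Fin n) K) : rk A = 0 ↔ A = 0 := by
  unfold rk
  rw [Submodule.finrank_eq_zero, Submodule.span_eq_bot]
  constructor
  · intro h
    ext i j
    have := h (A i) ⟨i, rfl⟩
    simpa using congrFun this j
  · rintro rfl x ⟨i, rfl⟩
    rfl

lemma rk_zero : rk (0 : Matrix (Fin m) (Fin n) K) = 0 := (rk_eq_zero_iff _).2 rfl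

lemma one_le_rk {A : Matrix (Fin m) (Fin n) K} (h : A ≠ 0) : 1 ≤ rk A :=
  Nat.one_le_iff_ne_zero.2 fun h0 => h ((rk_eq_zero_iff A).1 h0)

lemma vmv_apply (u : Fin m → K) (v : Fin n → K) (i : Fin m) (j : Fin n) :
    Matrix.vecMulVec u v i j = u i * v j := rfl

lemma vmv_zero_left (v : Fin n → K) : Matrix.vecMulVec (0 : Fin m → K) v = 0 := by
  ext i j; simp [vmv_apply]

lemma vmv_zero_right (u : Fin m → K) : Matrix.vecMulVec u (0 : Fin n → K) = 0 := by
  ext i j; simp [vmv_apply]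

lemma vmv_ne_zero {u : Fin m → K} {v : Fin n → K} (hu : u ≠ 0) (hv : v ≠ 0) :
    Matrix.vecMulVec u v ≠ 0 := by
  obtain ⟨i, hi⟩ := Function.ne_iff.1 hu
  obtain ⟨j, hj⟩ := Function.ne_iff.1 hv
  intro h
  have h2 := congrFun (congrFun h i) j
  simp only [vmv_apply, Matrix.zero_apply, mul_eq_zero] at h2
  rcases h2 with h2 | h2
  · exact hi h2
  · exact hj h2

lemma vmv_sub_same_left (u : Fin m → K) (v w : Fin n → K) :
    Matrix.vecMulVec u v - Matrix.vecMulVec u w = Matrix.vecMulVec u (v - w) := by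
  ext i j; simp [vmv_apply, mul_sub]

lemma vmv_smul_left (μ : K) (u : Fin m → K) (v : Fin n → K) :
    Matrix.vecMulVec (μ • u) v = Matrix.vecMulVec u (μ • v) := by
  ext i j
  rw [vmv_apply, vmv_apply, Pi.smul_apply, Pi.smul_apply, smul_eq_mul, smul_eq_mul]
  ring

lemma vmv_transpose (u : Fin m → K) (v : Fin n → K) :
    (Matrix.vecMulVec u v)ᵀ = Matrix.vecMulVec v u := by
  ext i j; simp [vmv_apply, Matrix.transpose_apply]; ring

lemma rk_vmv_le (u : Fin m → K) (v : Fin n → K) : rk (Matrix.vecMulVec u v) ≤ 1 := by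
  unfold rk
  have hle : Submodule.span K (Set.range fun i => Matrix.vecMulVec u v i) ≤ K ∙ v := by
    rw [Submodule.span_le]
    rintro x ⟨i, rfl⟩
    exact Submodule.mem_span_singleton.2 ⟨u i, by funext j; simp [vmv_apply]⟩
  refine le_trans (Submodule.finrank_mono hle) ?_
  by_cases hv : v = 0
  · subst hv
    rw [Submodule.span_zero_singleton]
    simp
  · rw [finrank_span_singleton hv]

lemma rk_vmv {u : Fin m → K} {v : Fin n → K} (hu : u ≠ 0) (hv : v ≠ 0) :
    rk (Matrix.vecMulVec u v) = 1 :=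
  le_antisymm (rk_vmv_le u v) (one_le_rk (vmv_ne_zero hu hv))

lemma exists_vmv {A : Matrix (Fin m) (Fin n) K} (h : rk A ≤ 1) :
    ∃ u v, A = Matrix.vecMulVec u v := by
  by_cases h0 : A = 0
  · exact ⟨0, 0, by rw [h0, vmv_zero_left]⟩
  have hrow : ∃ i, A i ≠ 0 := by
    by_contra hc
    push_neg at hc
    exact h0 (by ext i j; simpa using congrFun (hc i) j)
  obtain ⟨i0, hi0⟩ := hrow
  have hsub : Submodule.span K {A i0} ≤ Submodule.span K (Set.range fun i => A i) := by
    rw [Submodule.span_singleton_le_iff_mem]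
    exact Submodule.subset_span ⟨i0, rfl⟩
  have heq : Submodule.span K {A i0} = Submodule.span K (Set.range fun i => A i) := by
    refine Submodule.eq_of_le_of_finrank_le hsub ?_
    refine le_trans h ?_
    rw [finrank_span_singleton hi0]
  have hmem : ∀ i, ∃ c : K, c • A i0 = A i := by
    intro i
    refine Submodule.mem_span_singleton.1 ?_
    rw [heq]
    exact Submodule.subset_span ⟨i, rfl⟩
  choose u hu using hmem
  refine ⟨u, A i0, ?_⟩
  ext i j
  rw [vmv_apply]
  have := congrFun (hu i) j
  simpa using this.symm

lemma exists_vmv_ne {A : Matrix (Fin m) (Fin n) K} (h : rk A ≤ 1) (h0 : A ≠ 0) :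
    ∃ u v, u ≠ 0 ∧ v ≠ 0 ∧ A = Matrix.vecMulVec u v := by
  obtain ⟨u, v, huv⟩ := exists_vmv h
  refine ⟨u, v, ?_, ?_, huv⟩
  · rintro rfl; exact h0 (by rw [huv, vmv_zero_left])
  · rintro rfl; exact h0 (by rw [huv, vmv_zero_right])

end Helpers

section LemP

variable {K : Type*} [Field K] {m n : ℕ}

lemma lemP {a1 a2 : Fin m → K} {b1 b2 : Fin n → K} (ha1 : a1 ≠ 0) (hb1 : b1 ≠ 0)
    (h : rk (Matrix.vecMulVec a1 b1 - Matrix.vecMulVec a2 b2) ≤ 1) :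
    (∃ μ : K, a2 = μ • a1) ∨ ∃ μ : K, b2 = μ • b1 := by
  by_cases hA : ∃ μ : K, a2 = μ • a1
  · exact Or.inl hA
  right
  obtain ⟨u, w, huw⟩ := exists_vmv h
  obtain ⟨i1, hi1⟩ := Function.ne_iff.1 ha1
  simp only [Pi.zero_apply] at hi1
  have hdet : ∃ i2, a1 i1 * a2 i2 - a1 i2 * a2 i1 ≠ 0 := by
    by_contra hc
    push_neg at hc
    refine hA ⟨a2 i1 / a1 i1, funext fun i => ?_⟩
    have hce := hc i
    rw [Pi.smul_apply, smul_eq_mul]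
    field_simp
    linear_combination hce
  obtain ⟨i2, hd⟩ := hdet
  have key : ∀ (i : Fin m) (j : Fin n), a1 i * b1 j - a2 i * b2 j = u i * w j := by
    intro i j
    have := congrFun (congrFun huw i) j
    simpa [Matrix.sub_apply, vmv_apply] using this
  set det := a1 i1 * a2 i2 - a1 i2 * a2 i1 with hdetdef
  have hb1w : ∀ j, det * b1 j = (a2 i2 * u i1 - a2 i1 * u i2) * w j := by
    intro j
    have e1 := key i1 j
    have e2 := key i2 j
    linear_combination a2 i2 * e1 - a2 i1 * e2
  have hb2w : ∀ j, det * b2 j = (a1 i2 * u i1 - a1 i1 * u i2) * w j := by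
    intro j
    have e1 := key i1 j
    have e2 := key i2 j
    linear_combination a1 i2 * e1 - a1 i1 * e2
  set s1 := a2 i2 * u i1 - a2 i1 * u i2 with hs1def
  set s2 := a1 i2 * u i1 - a1 i1 * u i2 with hs2def
  have hs1 : s1 ≠ 0 := by
    intro h0
    apply hb1
    funext j
    have := hb1w j
    rw [h0, zero_mul] at this
    have := mul_eq_zero.1 this
    rcases this with h1 | h1
    · exact absurd h1 hd
    · exact h1
  refine ⟨s2 / s1, funext fun j => ?_⟩
  have h1 := hb1w j
  have h2 := hb2w j
  have hmain : det * (s1 * b2 j) = det * (s2 * b1 j) := by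
    linear_combination s1 * h2 - s2 * h1
  have := mul_left_cancel₀ hd hmain
  rw [Pi.smul_apply, smul_eq_mul]
  field_simp
  linear_combination this

end LemP

section PH

open Function

lemma PH {D : Type*} [Field D] [Fintype D] {K : Type*} [Field K] [Fintype K]
    {m n : ℕ} (hcard : Fintype.card K < Fintype.card D)
    {c : Fin m → K} (hc : c ≠ 0) {r : D → Fin n → K} (hr : Injective r)
    {W : Matrix (Fin m) (Fin n) K}
    (h : ∀ t, rk (W - Matrix.vecMulVec c (r t)) ≤ 1) :
    ∃ w, W = Matrix.vecMulVec c w := by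
  by_contra hW
  push_neg at hW
  have hne : ∀ t, W - Matrix.vecMulVec c (r t) ≠ 0 := fun t h0 =>
    hW (r t) (by rwa [sub_eq_zero] at h0)
  choose a b ha hb hab using fun t => exists_vmv_ne (h t) (hne t)
  obtain ⟨i0, hi0⟩ := Function.ne_iff.1 hc
  simp only [Pi.zero_apply] at hi0
  -- Step 1 : find a functional killing c but not W
  have step1 : ∃ f : Fin m → K, (∑ i, f i * c i) = 0 ∧ (fun j => ∑ i, f i * W i j) ≠ 0 := by
    by_contra hs
    push_neg at hs
    refine hW ((c i0)⁻¹ • W i0) ?_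
    ext i j
    set f : Fin m → K := fun k =>
      (if k = i then (1:K) else 0) - (c i / c i0) * (if k = i0 then (1:K) else 0) with hf
    have hfc : (∑ k, f k * c k) = 0 := by
      simp only [hf, sub_mul, ite_mul, one_mul, zero_mul, mul_assoc]
      rw [Finset.sum_sub_distrib, Finset.sum_ite_eq' Finset.univ i c,
        ← Finset.mul_sum, Finset.sum_ite_eq' Finset.univ i0 c]
      simp only [Finset.mem_univ, if_true]
      field_simp
      ring
    have hfW := hs f hfc
    have hfWj := congrFun hfW j
    simp only [hf, sub_mul, ite_mul, one_mul, zero_mul, mul_assoc] at hfWj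
    rw [Finset.sum_sub_distrib, Finset.sum_ite_eq' Finset.univ i (fun k => W k j),
      ← Finset.mul_sum, Finset.sum_ite_eq' Finset.univ i0 (fun k => W k j)] at hfWj
    simp only [Finset.mem_univ, if_true, Pi.zero_apply] at hfWj
    rw [vmv_apply, Pi.smul_apply, smul_eq_mul]
    field_simp at hfWj ⊢
    linear_combination hfWj
  obtain ⟨f, hfc, hfW⟩ := step1
  set b0 : Fin n → K := fun j => ∑ i, f i * W i j with hb0
  have keyE : ∀ t (i : Fin m) (j : Fin n), W i j - c i * r t j = a t i * b t j := by
    intro t i j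
    have := congrFun (congrFun (hab t) i) j
    simpa [Matrix.sub_apply, vmv_apply] using this
  have key : ∀ t j, b0 j = (∑ i, f i * a t i) * b t j := by
    intro t j
    have hh : (∑ i, f i * (W i j - c i * r t j)) = ∑ i, f i * (a t i * b t j) :=
      Finset.sum_congr rfl fun i _ => by rw [keyE t i j]
    rw [Finset.sum_mul]
    rw [show (∑ i, f i * a t i * b t j) = ∑ i, f i * (a t i * b t j) from
      Finset.sum_congr rfl fun i _ => by ring, ← hh]
    simp only [mul_sub]
    rw [Finset.sum_sub_distrib,
      show (∑ i, f i * (c i * r t j)) = (∑ i, f i * c i) * r t j by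
        rw [Finset.sum_mul]; exact Finset.sum_congr rfl fun i _ => by ring,
      hfc, zero_mul, sub_zero]
  set α : D → K := fun t => ∑ i, f i * a t i with hα
  have hαne : ∀ t, α t ≠ 0 := by
    intro t h0
    apply hfW
    funext j
    have hk := key t j
    rw [show (∑ i, f i * a t i) = α t from rfl, h0, zero_mul] at hk
    exact hk
  have hbinv : ∀ t j, b t j = (α t)⁻¹ * b0 j := by
    intro t j
    have h4 := congrArg ((α t)⁻¹ * ·) (key t j).symm
    rwa [show (∑ i, f i * a t i) = α t from rfl, ← mul_assoc,
      inv_mul_cancel₀ (hαne t), one_mul] at h4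
  -- Step 3 : all r t lie on a line through r 0
  set ψ : D → K := fun t =>
    (c i0)⁻¹ * (a (0:D) i0 * (α (0:D))⁻¹ * 1 - a t i0 * (α t)⁻¹ * 1) with hψ
  have hline : ∀ t j, r t j - r (0:D) j = ψ t * b0 j := by
    intro t j
    have e1 := keyE t i0 j
    have e2 := keyE (0:D) i0 j
    rw [hbinv t j] at e1
    rw [hbinv (0:D) j] at e2
    have step : c i0 * (r t j - r (0:D) j)
        = a (0:D) i0 * (α (0:D))⁻¹ * b0 j - a t i0 * (α t)⁻¹ * b0 j := by
      linear_combination e2 - e1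
    have h3 := congrArg ((c i0)⁻¹ * ·) step
    rw [← mul_assoc, inv_mul_cancel₀ hi0, one_mul] at h3
    rw [hψ]
    linear_combination h3
  have hinj : Injective ψ := by
    intro t s hts
    apply hr
    funext j
    have h1 := hline t j
    have h2 := hline s j
    linear_combination h1 - h2 + b0 j * hts
  have := Fintype.card_le_of_injective ψ hinj
  omega

end PH

section Main

open Function

set_option maxHeartbeats 2000000 in
set_option synthInstance.maxHeartbeats 400000 in
lemma key_step {D D' : Type*} [Field D] [Fintype D] [Field D'] [Fintype D']
    {m n m' n' : ℕ} (hcard : Fintype.card D' < Fintype.card D)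
    (φ : Matrix (Fin m) (Fin n) D → Matrix (Fin m') (Fin n') D')
    (hhom : IsGraphHom φ) :
    ∀ (d : ℕ) (A B : Matrix (Fin m) (Fin n) D), rk (A - B) ≤ d → rk (φ A - φ B) ≤ 1 := by
  intro d
  induction d with
  | zero =>
    intro A B hAB
    have hAB' : A = B := by
      have := (rk_eq_zero_iff (A - B)).1 (Nat.le_zero.1 hAB)
      rwa [sub_eq_zero] at this
    rw [hAB', sub_self, rk_zero]
    omega
  | succ d ih =>
    intro A B hAB
    rcases le_or_gt (rk (A - B)) d with hle | hlt
    · exact ih A B hle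
    have hd : rk (A - B) = d + 1 := le_antisymm hAB hlt
    rcases Nat.eq_zero_or_pos d with rfl | hdpos
    · exact le_of_eq (hhom A B hd)
    classical
    set V := Submodule.span D (Set.range fun i => (A - B) i) with hV
    have hfr : Module.finrank D V = d + 1 := hd
    let bV : Module.Basis (Fin (d+1)) D V := Module.finBasisOfFinrankEq D V hfr
    have hrowmem : ∀ i, (A - B) i ∈ V := fun i => Submodule.subset_span ⟨i, rfl⟩
    set cc : Fin m → Fin (d+1) → D := fun i k => bV.repr ⟨(A - B) i, hrowmem i⟩ k with hcc
    set w : Fin (d+1) → (Fin n → D) := fun k => (bV k : Fin n → D) with hw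
    have hsum : ∀ i, (A - B) i = ∑ k, cc i k • w k := by
      intro i
      have h1 := bV.sum_repr ⟨(A - B) i, hrowmem i⟩
      have h2 := congrArg (V.subtype) h1
      rw [map_sum] at h2
      simp only [Submodule.subtype_apply, _root_.map_smul] at h2
      rw [← h2]
    set i1 : Fin (d+1) := ⟨0, by omega⟩ with hi1
    set i2 : Fin (d+1) := ⟨1, by omega⟩ with hi2
    have hzero : (0 : Fin (d+1)) = i1 := rfl
    have hne12 : i2 ≠ i1 := by rw [hi1, hi2]; exact Fin.ne_of_val_ne (by norm_num)
    set U := Submodule.span D (Set.range fun k : Fin d => w k.succ) with hU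
    have hUfin : Module.finrank D U ≤ d := by
      have h1 := finrank_range_le_card (R := D) (fun k : Fin d => w k.succ)
      simpa [Set.finrank] using h1
    have hwUsucc : ∀ k : Fin d, w k.succ ∈ U := fun k => Submodule.subset_span ⟨k, rfl⟩
    have hw2U : w i2 ∈ U := by
      have he : (⟨0, hdpos⟩ : Fin d).succ = i2 := by simp [Fin.ext_iff, hi2]
      rw [← he]
      exact hwUsucc _
    set u1 : Fin m → D := fun i => cc i i1 with hu1def
    have hu1 : u1 ≠ 0 := by
      intro h0
      have hVU : V ≤ U := by
        conv_lhs => rw [hV]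
        rw [Submodule.span_le]
        rintro x ⟨i, rfl⟩
        show (A - B) i ∈ U
        rw [hsum i, Fin.sum_univ_succ, hzero]
        have hci : cc i i1 = 0 := congrFun h0 i
        rw [hci, zero_smul, zero_add]
        exact Submodule.sum_mem _ fun k _ => Submodule.smul_mem _ _ (hwUsucc k)
      have hmono := Submodule.finrank_mono (M := Fin n → D) (R := D) hVU
      omega
    -- the midpoint family
    obtain ⟨C, hCdef⟩ : ∃ Cf : D → Matrix (Fin m) (Fin n) D,
        ∀ t, Cf t = B + Matrix.vecMulVec u1 (w i1 + t • w i2) := ⟨_, fun _ => rfl⟩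
    have hwnz : ∀ t : D, w i1 + t • w i2 ≠ 0 := by
      intro t h0
      have hx : (bV i1 + t • bV i2 : V) = 0 := by
        apply Subtype.val_injective
        push_cast
        exact h0
      have h5 : (bV.repr (bV i1 + t • bV i2)) i1 = 0 := by rw [hx]; simp
      rw [map_add, _root_.map_smul, Module.Basis.repr_self, Module.Basis.repr_self] at h5
      rw [Finsupp.add_apply, Finsupp.smul_apply, Finsupp.single_apply,
        Finsupp.single_apply] at h5
      simp only [if_pos rfl, if_neg hne12, smul_zero, add_zero] at h5
      exact one_ne_zero h5
    have hw2nz : w i2 ≠ 0 := by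
      intro h0
      have h5 : ((bV i2 : V) : Fin n → D) = 0 := h0
      rw [Submodule.coe_eq_zero] at h5
      exact bV.ne_zero i2 h5
    have hCB : ∀ t, C t - B = Matrix.vecMulVec u1 (w i1 + t • w i2) := by
      intro t
      rw [hCdef t, add_sub_cancel_left]
    have hCtCs : ∀ t s, C t - C s = Matrix.vecMulVec u1 ((t - s) • w i2) := by
      intro t s
      rw [hCdef t, hCdef s, add_sub_add_left_eq_sub, vmv_sub_same_left]
      have h7 : w i1 + t • w i2 - (w i1 + s • w i2) = (t - s) • w i2 := by module
      rw [h7]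
    have hAC : ∀ t, rk (A - C t) ≤ d := by
      intro t
      have hrows : ∀ i, (A - C t) i ∈ U := by
        intro i
        have hform : (A - C t) i
            = (∑ k : Fin d, cc i (k.succ) • w k.succ) - (t * u1 i) • w i2 := by
          have h6 : (A - C t) i = (A - B) i - u1 i • (w i1 + t • w i2) := by
            funext j
            rw [hCdef t]
            simp only [Matrix.sub_apply, Matrix.add_apply, Pi.sub_apply, Pi.smul_apply,
              Pi.add_apply, smul_eq_mul, vmv_apply]
            ring
          rw [h6, hsum i, Fin.sum_univ_succ, hzero]
          rw [show cc i i1 • w i1 = u1 i • w i1 from rfl]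
          module
        rw [hform]
        exact sub_mem (Submodule.sum_mem _ fun k _ => Submodule.smul_mem _ _ (hwUsucc k))
          (Submodule.smul_mem _ _ hw2U)
      have hle2 : Submodule.span D (Set.range fun i => (A - C t) i) ≤ U :=
        Submodule.span_le.2 (by rintro x ⟨i, rfl⟩; exact hrows i)
      have hmono2 := Submodule.finrank_mono (R := D) (M := Fin n → D) hle2
      exact le_trans hmono2 hUfin
    -- images
    have hZt1 : ∀ t, rk (φ (C t) - φ B) = 1 := fun t =>
      hhom _ _ (by rw [hCB t]; exact rk_vmv hu1 (hwnz t))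
    have hZts : ∀ t s, t ≠ s → rk (φ (C t) - φ (C s)) = 1 := by
      intro t s hts
      refine hhom _ _ ?_
      rw [hCtCs t s]
      exact rk_vmv hu1 (smul_ne_zero (sub_ne_zero.2 hts) hw2nz)
    have hIH : ∀ t, rk (φ A - φ (C t)) ≤ 1 := fun t => ih A (C t) (hAC t)
    have hDt : ∀ t, ∃ (av : Fin m' → D') (bv : Fin n' → D'), av ≠ 0 ∧ bv ≠ 0 ∧
        φ (C t) - φ B = Matrix.vecMulVec av bv := by
      intro t
      refine exists_vmv_ne (le_of_eq (hZt1 t)) ?_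
      intro h0
      have hcontr := hZt1 t
      rw [h0, rk_zero] at hcontr
      omega
    choose a b hha hhb hhab using hDt
    have hZne : ∀ t s, t ≠ s → φ (C t) ≠ φ (C s) := by
      intro t s hts h0
      have hcontr := hZts t s hts
      rw [h0, sub_self, rk_zero] at hcontr
      omega
    have hQ : ∀ p q : D, p ≠ q →
        (∃ μ : D', a p = μ • a q) ∨ (∃ μ : D', b p = μ • b q) := by
      intro p q hpq
      apply lemP (hha q) (hhb q)
      rw [← hhab q, ← hhab p, sub_sub_sub_cancel_right]
      exact le_of_eq (hZts q p (Ne.symm hpq))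
    have htri : (∃ t0, ∀ t, ∃ μ : D', a t = μ • a t0)
        ∨ (∃ t0, ∀ t, ∃ μ : D', b t = μ • b t0) := by
      by_cases hA : ∀ t s : D, ∃ μ : D', a t = μ • a s
      · exact Or.inl ⟨0, fun t => hA t 0⟩
      right
      push_neg at hA
      obtain ⟨t0, s0, hA'⟩ := hA
      refine ⟨s0, fun p => ?_⟩
      have ht0s0 : t0 ≠ s0 := by
        intro h
        exact hA' 1 (by rw [h, one_smul])
      have hbt0 : ∃ μ : D', b t0 = μ • b s0 := by
        rcases hQ t0 s0 ht0s0 with h | h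
        · obtain ⟨μ, e⟩ := h
          exact absurd e (hA' μ)
        · exact h
      by_cases hps : p = s0
      · exact ⟨1, by rw [hps, one_smul]⟩
      by_cases hpt : p = t0
      · rw [hpt]; exact hbt0
      rcases hQ p s0 hps with h1 | h1
      · rcases hQ p t0 hpt with h2 | h2
        · obtain ⟨μ1, e1⟩ := h1
          obtain ⟨μ2, e2⟩ := h2
          have hμ2 : μ2 ≠ 0 := by
            intro hz
            rw [hz, zero_smul] at e2
            exact hha p e2
          have ht0ap : a t0 = μ2⁻¹ • a p := by
            rw [e2, smul_smul, inv_mul_cancel₀ hμ2, one_smul]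
          exact absurd (by rw [ht0ap, e1, smul_smul] :
            a t0 = (μ2⁻¹ * μ1) • a s0) (hA' _)
        · obtain ⟨μ, e⟩ := h2
          obtain ⟨ν, f⟩ := hbt0
          exact ⟨μ * ν, by rw [e, f, smul_smul]⟩
      · exact h1
    rcases htri with ⟨t0, hall⟩ | ⟨t0, hall⟩
    · -- common column direction
      choose μ hμ using hall
      obtain ⟨r, hrdef⟩ : ∃ rf : D → Fin n' → D', ∀ t, rf t = μ t • b t := ⟨_, fun _ => rfl⟩
      have hVform : ∀ t, φ (C t) - φ B = Matrix.vecMulVec (a t0) (r t) := by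
        intro t
        rw [hrdef t, hhab t, hμ t, vmv_smul_left]
      have hrinj : Injective r := by
        intro t s hts
        by_contra htne
        refine hZne t s htne ?_
        have he : φ (C t) - φ B = φ (C s) - φ B := by
          rw [hVform t, hVform s, hts]
        exact sub_left_inj.1 he
      have hph : ∀ t, rk ((φ A - φ B) - Matrix.vecMulVec (a t0) (r t)) ≤ 1 := by
        intro t
        rw [← hVform t, sub_sub_sub_cancel_right]
        exact hIH t
      obtain ⟨wv, hwv⟩ := PH hcard (hha t0) hrinj hph
      rw [hwv]
      exact rk_vmv_le _ _
    · -- common row direction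
      choose μ hμ using hall
      obtain ⟨r, hrdef⟩ : ∃ rf : D → Fin m' → D', ∀ t, rf t = μ t • a t := ⟨_, fun _ => rfl⟩
      have hVform : ∀ t, (φ (C t) - φ B)ᵀ = Matrix.vecMulVec (b t0) (r t) := by
        intro t
        rw [hrdef t, hhab t, hμ t, vmv_transpose, vmv_smul_left]
      have hrinj : Injective r := by
        intro t s hts
        by_contra htne
        refine hZne t s htne ?_
        have he : (φ (C t) - φ B)ᵀ = (φ (C s) - φ B)ᵀ := by
          rw [hVform t, hVform s, hts]
        have he2 : φ (C t) - φ B = φ (C s) - φ B := by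
          have h8 := congrArg Matrix.transpose he
          rwa [Matrix.transpose_transpose, Matrix.transpose_transpose] at h8
        exact sub_left_inj.1 he2
      have hph : ∀ t, rk ((φ A - φ B)ᵀ - Matrix.vecMulVec (b t0) (r t)) ≤ 1 := by
        intro t
        rw [← hVform t, ← Matrix.transpose_sub, sub_sub_sub_cancel_right, rk_transpose]
        exact hIH t
      obtain ⟨wv, hwv⟩ := PH hcard (hhb t0) hrinj hph
      have h9 : φ A - φ B = Matrix.vecMulVec wv (b t0) := by
        have h7 := congrArg Matrix.transpose hwv
        rwa [Matrix.transpose_transpose, vmv_transpose] at h7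
      rw [h9]
      exact rk_vmv_le _ _

end Main


/-- over finite fields with `|D| > |D'|`, every graph homomorphism is a
(vertex) colouring (Theorem `finitefieldsooooa`). -/
theorem stmt12 {D D' : Type*} [Field D] [Fintype D] [Field D'] [Fintype D']
    {m n m' n' : ℕ}
    (hcard : Fintype.card D' < Fintype.card D)
    (hm : 2 ≤ m) (hn : 2 ≤ n) (hm' : 2 ≤ m') (hn' : 2 ≤ n')
    (φ : Matrix (Fin m) (Fin n) D → Matrix (Fin m') (Fin n') D')
    (hhom : IsGraphHom φ) :
    IsColouring φ := by
  refine ⟨⟨φ 0, 0, rfl⟩, ?_⟩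
  rintro X ⟨A, rfl⟩ Y ⟨B, rfl⟩ hne
  have h1 := key_step hcard φ hhom (rk (A - B)) A B le_rfl
  have h2 : φ A - φ B ≠ 0 := fun h0 => hne (by rwa [sub_eq_zero] at h0)
  exact le_antisymm h1 (one_le_rk h2)
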